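/- arXiv:1708.04215 — 5 statements merged into one kernel-verified Lean document; each statement's English description precedes it below -/
import Mathlib

section
/- Let x be a circulation on a strongly positive digraph G (x(e) > 0 for all edges e) satisfying x(δ(S)) ≥ 2 for all nonempty proper vertex subsets S, and let S be a tight set (x(δ(S)) = 2, equivalently x(δ⁻(S)) = x(δ⁺(S)) = 1). Let S₁, …, S_ℓ be the strongly connected components of the induced subgraph G[S], indexed in topological order. Then δ⁻(S₁) = δ⁻(S), δ⁺(S_ℓ) = δ⁺(S), and for each 2 ≤ k ≤ ℓ, δ⁻(S_k) = δ⁺(S_{k−1}); moreover each S_k is tight: x(δ⁻(S_k)) = x(δ⁺(S_k)) = 1. -/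
open Finset

variable {V : Type*}

/-- Edges of `E` entering the vertex set `S`. -/
def dIn [DecidableEq V] (E : Finset (V × V)) (S : Finset V) : Finset (V × V) :=
  E.filter (fun e => e.1 ∉ S ∧ e.2 ∈ S)

/-- Edges of `E` leaving the vertex set `S`. -/
def dOut [DecidableEq V] (E : Finset (V × V)) (S : Finset V) : Finset (V × V) :=
  E.filter (fun e => e.1 ∈ S ∧ e.2 ∉ S)

lemma flow_balance [DecidableEq V] [Fintype V] (E : Finset (V × V)) (x : V × V → ℝ)
    (hcirc : ∀ v : V, ∑ e ∈ E.filter (fun e => e.1 = v), x e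
        = ∑ e ∈ E.filter (fun e => e.2 = v), x e) (R : Finset V) :
    ∑ e ∈ dIn E R, x e = ∑ e ∈ dOut E R, x e := by
  have hfst : ∑ e ∈ E.filter (fun e => e.1 ∈ R), x e
      = ∑ v ∈ R, ∑ e ∈ E.filter (fun e => e.1 = v), x e := by
    simp only [Finset.sum_filter]
    rw [Finset.sum_comm]
    refine Finset.sum_congr rfl fun e _ => ?_
    simp [eq_comm]
  have hsnd : ∑ e ∈ E.filter (fun e => e.2 ∈ R), x e
      = ∑ v ∈ R, ∑ e ∈ E.filter (fun e => e.2 = v), x e := by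
    simp only [Finset.sum_filter]
    rw [Finset.sum_comm]
    refine Finset.sum_congr rfl fun e _ => ?_
    simp [eq_comm]
  have hmain : ∑ e ∈ E.filter (fun e => e.1 ∈ R), x e
      = ∑ e ∈ E.filter (fun e => e.2 ∈ R), x e := by
    rw [hfst, hsnd]; exact Finset.sum_congr rfl fun v _ => hcirc v
  have hsplit1 : ∑ e ∈ E.filter (fun e => e.1 ∈ R), x e
      = ∑ e ∈ E.filter (fun e => e.1 ∈ R ∧ e.2 ∈ R), x e + ∑ e ∈ dOut E R, x e := by
    rw [dOut, ← Finset.sum_filter_add_sum_filter_not (E.filter (fun e => e.1 ∈ R))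
      (fun e => e.2 ∈ R)]
    rw [Finset.filter_filter, Finset.filter_filter]
  have hsplit2 : ∑ e ∈ E.filter (fun e => e.2 ∈ R), x e
      = ∑ e ∈ E.filter (fun e => e.1 ∈ R ∧ e.2 ∈ R), x e + ∑ e ∈ dIn E R, x e := by
    rw [dIn, ← Finset.sum_filter_add_sum_filter_not (E.filter (fun e => e.2 ∈ R))
      (fun e => e.1 ∈ R)]
    rw [Finset.filter_filter, Finset.filter_filter]
    congr 1
    · apply Finset.sum_congr _ (fun _ _ => rfl)
      apply Finset.filter_congr; intro e _; tauto
    · apply Finset.sum_congr _ (fun _ _ => rfl)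
      apply Finset.filter_congr; intro e _; tauto
  linarith [hmain, hsplit1, hsplit2]

lemma subset_eq_of_sum_le [DecidableEq V] (E A B : Finset (V × V)) (x : V × V → ℝ)
    (hpos : ∀ e ∈ E, 0 < x e) (hAB : A ⊆ B) (hBE : B ⊆ E)
    (hsum : ∑ e ∈ B, x e ≤ ∑ e ∈ A, x e) : A = B := by
  have hsd : ∑ e ∈ B \ A, x e + ∑ e ∈ A, x e = ∑ e ∈ B, x e := Finset.sum_sdiff hAB
  by_contra h
  have hne : (B \ A).Nonempty := by
    rw [Finset.sdiff_nonempty]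
    intro hBA
    exact h (Finset.Subset.antisymm hAB hBA)
  have : 0 < ∑ e ∈ B \ A, x e :=
    Finset.sum_pos (fun e he => hpos e (hBE (Finset.mem_sdiff.mp he).1)) hne
  linarith

/-- Structure of a tight set: if `x > 0` is a circulation satisfying the subtour
elimination constraints, `S` is a tight set (`x(δ(S)) = 2`), and `C 0, …, C (ℓ-1)` are the
strongly connected components of `G[S]` in topological order, then
`δ⁻(C 0) = δ⁻(S)`, `δ⁺(C (ℓ-1)) = δ⁺(S)`, consecutive components satisfy
`δ⁻(C k) = δ⁺(C (k-1))`, and each component is tight. -/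
theorem tight_set_structure [DecidableEq V] [Fintype V] (E : Finset (V × V))
    (x : V × V → ℝ)
    (hpos : ∀ e ∈ E, 0 < x e)
    (hcirc : ∀ v : V, ∑ e ∈ E.filter (fun e => e.1 = v), x e
        = ∑ e ∈ E.filter (fun e => e.2 = v), x e)
    (hsubtour : ∀ R : Finset V, R.Nonempty → R ≠ Finset.univ →
      2 ≤ (∑ e ∈ dIn E R, x e) + (∑ e ∈ dOut E R, x e))
    (S : Finset V) (hSne : S.Nonempty) (hSproper : S ≠ Finset.univ)
    (htight : (∑ e ∈ dIn E S, x e) + (∑ e ∈ dOut E S, x e) = 2)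
    (ℓ : ℕ) (hl : 0 < ℓ) (C : Fin ℓ → Finset V)
    (hCne : ∀ k, (C k).Nonempty)
    (hCsub : ∀ k, C k ⊆ S)
    (hCpart : ∀ v ∈ S, ∃! k, v ∈ C k)
    (hCsc : ∀ k, ∀ u ∈ C k, ∀ v ∈ C k,
      Relation.ReflTransGen (fun a b => (a, b) ∈ E ∧ a ∈ C k ∧ b ∈ C k) u v)
    (hCtopo : ∀ i j : Fin ℓ, j < i → ∀ u ∈ C i, ∀ v ∈ C j, (u, v) ∉ E) :
    dIn E (C ⟨0, hl⟩) = dIn E S ∧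
    dOut E (C ⟨ℓ - 1, by omega⟩) = dOut E S ∧
    (∀ k : Fin ℓ, 0 < k.val →
      dIn E (C k) = dOut E (C ⟨k.val - 1, by have := k.isLt; omega⟩)) ∧
    (∀ k : Fin ℓ, (∑ e ∈ dIn E (C k), x e) = 1 ∧ (∑ e ∈ dOut E (C k), x e) = 1) := by
  classical
  have huniq : ∀ v (i j : Fin ℓ), v ∈ C i → v ∈ C j → i = j := by
    intro v i j hi hj
    obtain ⟨k, -, hk⟩ := hCpart v (hCsub i hi)
    rw [hk i hi, hk j hj]
  set T : ℕ → Finset V := fun n => S.filter (fun v => ∃ j : Fin ℓ, j.val ≤ n ∧ v ∈ C j)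
    with hTdef
  set U : ℕ → Finset V := fun n => S.filter (fun v => ∃ j : Fin ℓ, n ≤ j.val ∧ v ∈ C j)
    with hUdef
  have hmemT : ∀ n v, v ∈ T n ↔ v ∈ S ∧ ∃ j : Fin ℓ, j.val ≤ n ∧ v ∈ C j := by
    intro n v; rw [hTdef]; exact Finset.mem_filter
  have hmemU : ∀ n v, v ∈ U n ↔ v ∈ S ∧ ∃ j : Fin ℓ, n ≤ j.val ∧ v ∈ C j := by
    intro n v; rw [hUdef]; exact Finset.mem_filter
  have hTS : ∀ n, T n ⊆ S := fun n => Finset.filter_subset _ _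
  have hUS : ∀ n, U n ⊆ S := fun n => Finset.filter_subset _ _
  have hCT : ∀ k : Fin ℓ, C k ⊆ T k.val := fun k v hv =>
    (hmemT _ _).mpr ⟨hCsub k hv, k, le_refl _, hv⟩
  have hCU : ∀ k : Fin ℓ, C k ⊆ U k.val := fun k v hv =>
    (hmemU _ _).mpr ⟨hCsub k hv, k, le_refl _, hv⟩
  have hT0 : T 0 = C ⟨0, hl⟩ := by
    ext v
    rw [hmemT]
    constructor
    · rintro ⟨hvS, j, hj, hvj⟩
      have hj0 : j = ⟨0, hl⟩ := by apply Fin.ext; simpa using hj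
      rwa [hj0] at hvj
    · intro hv
      exact ⟨hCsub _ hv, ⟨0, hl⟩, le_refl _, hv⟩
  have hUlast : U (ℓ - 1) = C ⟨ℓ - 1, by omega⟩ := by
    ext v
    rw [hmemU]
    constructor
    · rintro ⟨hvS, j, hj, hvj⟩
      have hj0 : j = ⟨ℓ - 1, by omega⟩ := by
        apply Fin.ext; have := j.isLt; simp only; omega
      rwa [hj0] at hvj
    · intro hv
      exact ⟨hCsub _ hv, ⟨ℓ - 1, by omega⟩, le_refl _, hv⟩
  have hTlast : T (ℓ - 1) = S := by
    apply Finset.Subset.antisymm (hTS _)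
    intro v hv
    obtain ⟨k, hk, -⟩ := hCpart v hv
    exact (hmemT _ _).mpr ⟨hv, k, by have := k.isLt; omega, hk⟩
  have hU0 : U 0 = S := by
    apply Finset.Subset.antisymm (hUS _)
    intro v hv
    obtain ⟨k, hk, -⟩ := hCpart v hv
    exact (hmemU _ _).mpr ⟨hv, k, Nat.zero_le _, hk⟩
  have hproper : ∀ R : Finset V, R ⊆ S → R ≠ Finset.univ := by
    intro R hR h
    exact hSproper (Finset.univ_subset_iff.mp (h ▸ hR))
  have hbal := flow_balance E x hcirc
  have hSin : ∑ e ∈ dIn E S, x e = 1 := by have := hbal S; linarith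
  have hSout : ∑ e ∈ dOut E S, x e = 1 := by have := hbal S; linarith
  have hnonneg : ∀ (A : Finset (V × V)), ∀ e ∈ A, A ⊆ E → 0 ≤ x e :=
    fun A e he hA => (hpos e (hA he)).le
  have hdInE : ∀ R : Finset V, dIn E R ⊆ E := fun R => Finset.filter_subset _ _
  have hdOutE : ∀ R : Finset V, dOut E R ⊆ E := fun R => Finset.filter_subset _ _
  -- inclusion of prefix in-cuts into dIn S
  have hInT : ∀ n, dIn E (T n) ⊆ dIn E S := by
    intro n e he
    rw [dIn, Finset.mem_filter] at he ⊢
    obtain ⟨heE, h1, h2⟩ := he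
    obtain ⟨h2S, j, hjn, hj⟩ := (hmemT _ _).mp h2
    refine ⟨heE, ?_, h2S⟩
    intro h1S
    obtain ⟨i, hi, -⟩ := hCpart e.1 h1S
    by_cases hcase : i.val ≤ n
    · exact h1 ((hmemT _ _).mpr ⟨h1S, i, hcase, hi⟩)
    · have hji : j < i := by rw [Fin.lt_def]; omega
      exact hCtopo i j hji e.1 hi e.2 hj (by rwa [Prod.mk.eta])
  have hOutU : ∀ n, dOut E (U n) ⊆ dOut E S := by
    intro n e he
    rw [dOut, Finset.mem_filter] at he ⊢
    obtain ⟨heE, h1, h2⟩ := he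
    obtain ⟨h1S, j, hjn, hj⟩ := (hmemU _ _).mp h1
    refine ⟨heE, h1S, ?_⟩
    intro h2S
    obtain ⟨i, hi, -⟩ := hCpart e.2 h2S
    by_cases hcase : n ≤ i.val
    · exact h2 ((hmemU _ _).mpr ⟨h2S, i, hcase, hi⟩)
    · have hij : i < j := by rw [Fin.lt_def]; omega
      exact hCtopo j i hij e.1 hj e.2 hi (by rwa [Prod.mk.eta])
  -- tightness of prefixes and suffixes
  have hTtight : ∀ k : Fin ℓ,
      (∑ e ∈ dIn E (T k.val), x e = 1) ∧ (∑ e ∈ dOut E (T k.val), x e = 1) ∧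
      dIn E (T k.val) = dIn E S := by
    intro k
    have hle : ∑ e ∈ dIn E (T k.val), x e ≤ ∑ e ∈ dIn E S, x e :=
      Finset.sum_le_sum_of_subset_of_nonneg (hInT k.val)
        (fun e he _ => (hpos e (hdInE S he)).le)
    have hbalT := hbal (T k.val)
    have hge := hsubtour (T k.val) ((hCne k).mono (hCT k))
      (hproper _ (hTS _))
    have h1 : ∑ e ∈ dIn E (T k.val), x e = 1 := by linarith
    refine ⟨h1, by linarith, ?_⟩
    exact subset_eq_of_sum_le E _ _ x hpos (hInT k.val) (hdInE S) (by linarith)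
  have hUtight : ∀ k : Fin ℓ,
      (∑ e ∈ dIn E (U k.val), x e = 1) ∧ (∑ e ∈ dOut E (U k.val), x e = 1) ∧
      dOut E (U k.val) = dOut E S := by
    intro k
    have hle : ∑ e ∈ dOut E (U k.val), x e ≤ ∑ e ∈ dOut E S, x e :=
      Finset.sum_le_sum_of_subset_of_nonneg (hOutU k.val)
        (fun e he _ => (hpos e (hdOutE S he)).le)
    have hbalU := hbal (U k.val)
    have hge := hsubtour (U k.val) ((hCne k).mono (hCU k))
      (hproper _ (hUS _))
    have h1 : ∑ e ∈ dOut E (U k.val), x e = 1 := by linarith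
    refine ⟨by linarith, h1, ?_⟩
    exact subset_eq_of_sum_le E _ _ x hpos (hOutU k.val) (hdOutE S) (by linarith)
  -- component cut inclusions
  have hInC : ∀ k : Fin ℓ, dIn E (C k) ⊆ dIn E (U k.val) := by
    intro k e he
    rw [dIn, Finset.mem_filter] at he ⊢
    obtain ⟨heE, h1, h2⟩ := he
    refine ⟨heE, ?_, hCU k h2⟩
    intro h1U
    obtain ⟨h1S, j, hjk, hj⟩ := (hmemU _ _).mp h1U
    have hjne : j ≠ k := fun h => h1 (h ▸ hj)
    have hvne : j.val ≠ k.val := fun h => hjne (Fin.ext h)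
    have hkj : k < j := by rw [Fin.lt_def]; omega
    exact hCtopo j k hkj e.1 hj e.2 h2 (by rwa [Prod.mk.eta])
  have hOutC : ∀ k : Fin ℓ, dOut E (C k) ⊆ dOut E (T k.val) := by
    intro k e he
    rw [dOut, Finset.mem_filter] at he ⊢
    obtain ⟨heE, h1, h2⟩ := he
    refine ⟨heE, hCT k h1, ?_⟩
    intro h2T
    obtain ⟨h2S, j, hjk, hj⟩ := (hmemT _ _).mp h2T
    have hjne : j ≠ k := fun h => h2 (h ▸ hj)
    have hvne : j.val ≠ k.val := fun h => hjne (Fin.ext h)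
    have hjk' : j < k := by rw [Fin.lt_def]; omega
    exact hCtopo k j hjk' e.1 h1 e.2 hj (by rwa [Prod.mk.eta])
  -- each component is tight, with identified cuts
  have hCtight : ∀ k : Fin ℓ,
      (∑ e ∈ dIn E (C k), x e = 1) ∧ (∑ e ∈ dOut E (C k), x e = 1) ∧
      dIn E (C k) = dIn E (U k.val) ∧ dOut E (C k) = dOut E (T k.val) := by
    intro k
    have hUk := hUtight k
    have hTk := hTtight k
    have hle : ∑ e ∈ dIn E (C k), x e ≤ ∑ e ∈ dIn E (U k.val), x e :=
      Finset.sum_le_sum_of_subset_of_nonneg (hInC k)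
        (fun e he _ => (hpos e (hdInE _ he)).le)
    have hbalC := hbal (C k)
    have hge := hsubtour (C k) (hCne k) (hproper _ (hCsub k))
    have h1 : ∑ e ∈ dIn E (C k), x e = 1 := by linarith [hUk.1]
    have h2 : ∑ e ∈ dOut E (C k), x e = 1 := by linarith
    refine ⟨h1, h2, ?_, ?_⟩
    · exact subset_eq_of_sum_le E _ _ x hpos (hInC k) (hdInE _) (by linarith [hUk.1])
    · exact subset_eq_of_sum_le E _ _ x hpos (hOutC k) (hdOutE _) (by linarith [hTk.2.1])
  -- conclusion 1
  have res1 : dIn E (C ⟨0, hl⟩) = dIn E S := by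
    have h := (hCtight ⟨0, hl⟩).2.2.1
    have h2 := (hUtight ⟨0, hl⟩).1
    rw [h]
    have : (⟨0, hl⟩ : Fin ℓ).val = 0 := rfl
    rw [this, hU0]
  have res2 : dOut E (C ⟨ℓ - 1, by omega⟩) = dOut E S := by
    have h := (hCtight ⟨ℓ - 1, by omega⟩).2.2.2
    rw [h]
    have : (⟨ℓ - 1, by omega⟩ : Fin ℓ).val = ℓ - 1 := rfl
    rw [this, hTlast]
  refine ⟨res1, res2, ?_, fun k => ⟨(hCtight k).1, (hCtight k).2.1⟩⟩
  -- conclusion 3: consecutive cuts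
  intro k hk
  set k' : Fin ℓ := ⟨k.val - 1, by have := k.isLt; omega⟩ with hk'def
  have hkv : k'.val = k.val - 1 := rfl
  have hmid : dIn E (U k.val) = dOut E (T (k.val - 1)) := by
    ext e
    rw [dIn, dOut]
    constructor
    · intro he
      obtain ⟨heE, h1, h2⟩ := Finset.mem_filter.mp he
      obtain ⟨h2S, j, hjk, hj⟩ := (hmemU _ _).mp h2
      have h1S : e.1 ∈ S := by
        by_contra h1S
        have hein : e ∈ dIn E S := Finset.mem_filter.mpr ⟨heE, h1S, h2S⟩
        rw [← res1, dIn, Finset.mem_filter] at hein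
        have : j = ⟨0, hl⟩ := huniq e.2 j ⟨0, hl⟩ hj hein.2.2
        rw [this] at hjk
        simp at hjk
        omega
      obtain ⟨i, hi, -⟩ := hCpart e.1 h1S
      have hik : i.val < k.val := by
        by_contra hik
        exact h1 ((hmemU _ _).mpr ⟨h1S, i, by omega, hi⟩)
      refine Finset.mem_filter.mpr ⟨heE, (hmemT _ _).mpr ⟨h1S, i, by omega, hi⟩, ?_⟩
      intro h2T
      obtain ⟨-, j', hj'k, hj'⟩ := (hmemT _ _).mp h2T
      have : j' = j := huniq e.2 j' j hj' hj
      omega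
    · intro he
      obtain ⟨heE, h1, h2⟩ := Finset.mem_filter.mp he
      obtain ⟨h1S, i, hik, hi⟩ := (hmemT _ _).mp h1
      have h2S : e.2 ∈ S := by
        by_contra h2S
        have heout : e ∈ dOut E S := Finset.mem_filter.mpr ⟨heE, h1S, h2S⟩
        rw [← res2, dOut, Finset.mem_filter] at heout
        have : i = ⟨ℓ - 1, by omega⟩ := huniq e.1 i _ hi heout.2.1
        have hiv : i.val = ℓ - 1 := by rw [this]
        have := k.isLt
        omega
      obtain ⟨j, hj, -⟩ := hCpart e.2 h2S
      have hjk : k.val ≤ j.val := by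
        by_contra hjk
        exact h2 ((hmemT _ _).mpr ⟨h2S, j, by omega, hj⟩)
      refine Finset.mem_filter.mpr ⟨heE, ?_, (hmemU _ _).mpr ⟨h2S, j, hjk, hj⟩⟩
      intro h1U
      obtain ⟨-, i', hi'k, hi'⟩ := (hmemU _ _).mp h1U
      have : i' = i := huniq e.1 i' i hi' hi
      omega
  have e1 : dIn E (C k) = dIn E (U k.val) := (hCtight k).2.2.1
  have e2 : dOut E (C k') = dOut E (T k'.val) := (hCtight k').2.2.2
  rw [e1, hmid, ← hkv, ← e2]
end

section
/- Under the hypotheses of the tight-set structure lemma, every directed path in G from a vertex u ∈ S_in to a vertex v ∈ S_out visits every strongly connected component of G[S], where S_in (resp. S_out) denotes the vertices of the tight set S with an incoming edge from outside S (resp. outgoing edge to outside S). -/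
open Finset

variable {V : Type*}

/-- Under the hypotheses of the tight-set structure lemma, every directed walk in `G`
from a vertex `u ∈ S_in` to a vertex `v ∈ S_out` visits every strongly connected
component of `G[S]`. -/
theorem path_through_every_scc [DecidableEq V] [Fintype V] (E : Finset (V × V))
    (x : V × V → ℝ)
    (hpos : ∀ e ∈ E, 0 < x e)
    (hcirc : ∀ v : V, ∑ e ∈ E.filter (fun e => e.1 = v), x e
        = ∑ e ∈ E.filter (fun e => e.2 = v), x e)
    (hsubtour : ∀ R : Finset V, R.Nonempty → R ≠ Finset.univ →
      2 ≤ (∑ e ∈ dIn E R, x e) + (∑ e ∈ dOut E R, x e))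
    (S : Finset V) (hSne : S.Nonempty) (hSproper : S ≠ Finset.univ)
    (htight : (∑ e ∈ dIn E S, x e) + (∑ e ∈ dOut E S, x e) = 2)
    (ℓ : ℕ) (hl : 0 < ℓ) (C : Fin ℓ → Finset V)
    (hCne : ∀ k, (C k).Nonempty)
    (hCsub : ∀ k, C k ⊆ S)
    (hCpart : ∀ v ∈ S, ∃! k, v ∈ C k)
    (hCsc : ∀ k, ∀ u ∈ C k, ∀ v ∈ C k,
      Relation.ReflTransGen (fun a b => (a, b) ∈ E ∧ a ∈ C k ∧ b ∈ C k) u v)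
    (hCtopo : ∀ i j : Fin ℓ, j < i → ∀ u ∈ C i, ∀ v ∈ C j, (u, v) ∉ E)
    (u v : V) (hu : u ∈ S) (huIn : ∃ a, a ∉ S ∧ (a, u) ∈ E)
    (hv : v ∈ S) (hvOut : ∃ b, b ∉ S ∧ (v, b) ∈ E)
    (p : List V) (hchain : p.Chain' (fun a b => (a, b) ∈ E))
    (hhead : p.head? = some u) (hlast : p.getLast? = some v) :
    ∀ k : Fin ℓ, ∃ w ∈ p, w ∈ C k := by
  classical
  -- circulation over any vertex set
  have hcircR : ∀ R : Finset V, ∑ e ∈ dIn E R, x e = ∑ e ∈ dOut E R, x e := by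
    intro R
    have e1 : E.filter (fun e => e.1 ∈ R)
        = R.biUnion (fun w => E.filter (fun e => e.1 = w)) := by
      ext e
      simp only [mem_filter, mem_biUnion]
      constructor
      · rintro ⟨he, h⟩; exact ⟨e.1, h, he, rfl⟩
      · rintro ⟨w, hw, he, rfl⟩; exact ⟨he, hw⟩
    have e2 : E.filter (fun e => e.2 ∈ R)
        = R.biUnion (fun w => E.filter (fun e => e.2 = w)) := by
      ext e
      simp only [mem_filter, mem_biUnion]
      constructor
      · rintro ⟨he, h⟩; exact ⟨e.2, h, he, rfl⟩
      · rintro ⟨w, hw, he, rfl⟩; exact ⟨he, hw⟩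
    have h1 : ∑ e ∈ E.filter (fun e => e.1 ∈ R), x e
        = ∑ e ∈ E.filter (fun e => e.2 ∈ R), x e := by
      rw [e1, e2, Finset.sum_biUnion, Finset.sum_biUnion]
      · exact Finset.sum_congr rfl (fun w _ => hcirc w)
      · intro a _ b _ hab
        simp only [Finset.disjoint_left, mem_filter]
        rintro e ⟨-, rfl⟩ ⟨-, h⟩; exact hab h
      · intro a _ b _ hab
        simp only [Finset.disjoint_left, mem_filter]
        rintro e ⟨-, rfl⟩ ⟨-, h⟩; exact hab h
    have split1 : ∑ e ∈ E.filter (fun e => e.1 ∈ R), x e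
        = (∑ e ∈ E.filter (fun e => e.1 ∈ R ∧ e.2 ∈ R), x e) + ∑ e ∈ dOut E R, x e := by
      rw [dOut, ← Finset.sum_filter_add_sum_filter_not (E.filter (fun e => e.1 ∈ R))
        (fun e => e.2 ∈ R), Finset.filter_filter, Finset.filter_filter]
    have split2 : ∑ e ∈ E.filter (fun e => e.2 ∈ R), x e
        = (∑ e ∈ E.filter (fun e => e.1 ∈ R ∧ e.2 ∈ R), x e) + ∑ e ∈ dIn E R, x e := by
      rw [dIn, ← Finset.sum_filter_add_sum_filter_not (E.filter (fun e => e.2 ∈ R))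
        (fun e => e.1 ∈ R), Finset.filter_filter, Finset.filter_filter]
      congr 1
      · apply Finset.sum_congr _ (fun _ _ => rfl)
        exact Finset.filter_congr (fun e _ => by tauto)
      · apply Finset.sum_congr _ (fun _ _ => rfl)
        exact Finset.filter_congr (fun e _ => by tauto)
    linarith
  -- equality of edge sets from equality of sums
  have eq_of_sum : ∀ T T' : Finset (V × V), T ⊆ T' → T' ⊆ E →
      (∑ e ∈ T', x e) ≤ ∑ e ∈ T, x e → T = T' := by
    intro T T' hTT hTE hsum
    by_contra hne
    obtain ⟨e, heT', heT⟩ : ∃ e ∈ T', e ∉ T := by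
      by_contra h
      push_neg at h
      exact hne (Finset.Subset.antisymm hTT h)
    have : ∑ e ∈ T, x e < ∑ e ∈ T', x e :=
      Finset.sum_lt_sum_of_subset hTT heT' heT (hpos e (hTE heT'))
        (fun j hj _ => le_of_lt (hpos j (hTE hj)))
    linarith
  have hxS : ∑ e ∈ dIn E S, x e = 1 := by
    have := hcircR S; linarith
  -- basic component facts
  have huniq : ∀ w : V, ∀ i j : Fin ℓ, w ∈ C i → w ∈ C j → i = j := by
    intro w i j hi hj
    obtain ⟨k, -, hk⟩ := hCpart w (hCsub i hi)
    rw [hk i hi, hk j hj]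
  have hmem : ∀ w ∈ S, ∃ i, w ∈ C i := fun w hw => (hCpart w hw).exists
  set z : Fin ℓ := ⟨0, hl⟩ with hz
  set last : Fin ℓ := ⟨ℓ - 1, by omega⟩ with hlastdef
  -- prefixes
  set P : ℕ → Finset V := fun n => S.filter (fun w => ∃ i : Fin ℓ, (i : ℕ) ≤ n ∧ w ∈ C i)
    with hP
  have hPsub : ∀ n, P n ⊆ S := fun n => Finset.filter_subset _ _
  have hCP : ∀ n : ℕ, ∀ i : Fin ℓ, (i : ℕ) ≤ n → C i ⊆ P n := by
    intro n i hi w hw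
    exact Finset.mem_filter.mpr ⟨hCsub i hw, i, hi, hw⟩
  have hPne : ∀ n, (P n).Nonempty := by
    intro n
    obtain ⟨w, hw⟩ := hCne z
    exact ⟨w, hCP n z (Nat.zero_le n) hw⟩
  have hPuniv : ∀ n, P n ≠ Finset.univ := by
    intro n h
    exact hSproper (Finset.eq_univ_of_forall (fun w => hPsub n (h ▸ Finset.mem_univ w)))
  have hPlast : P (ℓ - 1) = S := by
    apply Finset.Subset.antisymm (hPsub _)
    intro w hw
    obtain ⟨i, hi⟩ := hmem w hw
    exact hCP _ i (by omega) hi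
  -- incoming edges of a prefix come from outside S
  have hdInP : ∀ n : ℕ, dIn E (P n) ⊆ dIn E S := by
    intro n e he
    rw [dIn, Finset.mem_filter] at he ⊢
    obtain ⟨heE, h1, h2⟩ := he
    refine ⟨heE, ?_, hPsub n h2⟩
    intro h1S
    obtain ⟨i, hi⟩ := hmem e.1 h1S
    obtain ⟨-, j, hjn, hj⟩ := Finset.mem_filter.mp h2
    have hni : ¬ ((i : ℕ) ≤ n) := fun h => h1 (hCP n i h hi)
    have : j < i := by rw [Fin.lt_def]; omega
    exact hCtopo i j this e.1 hi e.2 hj (by simpa using heE)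
  have hPin : ∀ n : ℕ, dIn E (P n) = dIn E S := by
    intro n
    apply eq_of_sum _ _ (hdInP n) (fun e he => Finset.mem_of_mem_filter e he)
    have h2 := hsubtour (P n) (hPne n) (hPuniv n)
    have h3 := hcircR (P n)
    rw [hxS]; linarith
  -- every edge entering S enters C 0
  have hInC0 : ∀ e ∈ dIn E S, e.2 ∈ C z := by
    intro e he
    rw [← hPin 0] at he
    obtain ⟨-, -, h2⟩ := Finset.mem_filter.mp he
    obtain ⟨-, j, hj0, hj⟩ := Finset.mem_filter.mp h2
    have : j = z := Fin.ext (by show (j : ℕ) = 0; omega)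
    exact this ▸ hj
  -- every edge leaving S leaves from C last
  have hOutLast : ∀ e ∈ dOut E S, e.1 ∈ C last := by
    have hsub : dOut E (C last) ⊆ dOut E S := by
      intro e he
      rw [dOut, Finset.mem_filter] at he ⊢
      obtain ⟨heE, h1, h2⟩ := he
      refine ⟨heE, hCsub last h1, ?_⟩
      intro h2S
      obtain ⟨j, hj⟩ := hmem e.2 h2S
      have hjne : j ≠ last := fun h => h2 (h ▸ hj)
      have : j < last := by
        rw [Fin.lt_def]
        have := j.isLt
        have : (j : ℕ) ≠ ℓ - 1 := fun h => hjne (Fin.ext h)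
        simp only [hlastdef]
        omega
      exact hCtopo last j this e.1 h1 e.2 hj (by simpa using heE)
    have heq : dOut E (C last) = dOut E S := by
      apply eq_of_sum _ _ hsub (fun e he => Finset.mem_of_mem_filter e he)
      have h2 := hsubtour (C last) (hCne last) (by
        intro h
        exact hSproper (Finset.eq_univ_of_forall
          (fun w => hCsub last (h ▸ Finset.mem_univ w))))
      have h3 := hcircR (C last)
      have h4 := hcircR S
      linarith
    intro e he
    rw [← heq] at he
    exact (Finset.mem_filter.mp he).2.1
  -- no skipping: edges leaving prefix P k go into C (k+1)
  have hnoskip : ∀ k : ℕ, ∀ hk : k + 1 < ℓ, ∀ e ∈ dOut E (P k), e.2 ∈ C ⟨k + 1, hk⟩ := by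
    intro k hk
    set k' : Fin ℓ := ⟨k + 1, hk⟩ with hk'
    have hsub : dIn E (C k') ⊆ dOut E (P k) := by
      intro e he
      rw [dIn, Finset.mem_filter] at he
      obtain ⟨heE, h1, h2⟩ := he
      have h1S : e.1 ∈ S := by
        by_contra h1S
        have : e ∈ dIn E S :=
          Finset.mem_filter.mpr ⟨heE, h1S, hCsub k' h2⟩
        have := hInC0 e this
        have : k' = z := huniq e.2 k' z h2 this
        simp only [hk', hz, Fin.mk.injEq] at this
        omega
      obtain ⟨i, hi⟩ := hmem e.1 h1S
      have hine : i ≠ k' := fun h => h1 (h ▸ hi)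
      have hile : ¬ (k' < i) := fun h => hCtopo i k' h e.1 hi e.2 h2 (by simpa using heE)
      have hik : (i : ℕ) ≤ k := by
        rw [Fin.lt_def] at hile
        have : (i : ℕ) ≠ k + 1 := fun h => hine (Fin.ext h)
        simp only [hk'] at hile this ⊢
        omega
      rw [dOut, Finset.mem_filter]
      refine ⟨heE, hCP k i hik hi, ?_⟩
      intro h2P
      obtain ⟨-, j, hjk, hj⟩ := Finset.mem_filter.mp h2P
      have : j = k' := huniq e.2 j k' hj h2
      simp only [this, hk'] at hjk
      omega
    have heq : dIn E (C k') = dOut E (P k) := by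
      apply eq_of_sum _ _ hsub (fun e he => Finset.mem_of_mem_filter e he)
      have h2 := hsubtour (C k') (hCne k') (by
        intro h
        exact hSproper (Finset.eq_univ_of_forall
          (fun w => hCsub k' (h ▸ Finset.mem_univ w))))
      have h3 := hcircR (C k')
      have h4 := hcircR (P k)
      have h5 : ∑ e ∈ dIn E (P k), x e = 1 := by rw [hPin k, hxS]
      linarith
    intro e he
    rw [← heq] at he
    exact (Finset.mem_filter.mp he).2.2
  -- step lemma: along an edge inside S components increase by 0 or 1
  have hstep : ∀ a b : V, (a, b) ∈ E → ∀ i : Fin ℓ, a ∈ C i → ∀ j : Fin ℓ, b ∈ C j →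
      j = i ∨ (i : ℕ) + 1 = (j : ℕ) := by
    intro a b hab i hi j hj
    by_cases hji : j = i
    · exact Or.inl hji
    right
    have hij : i < j := by
      have : ¬ (j < i) := fun h => hCtopo i j h a hi b hj hab
      rw [Fin.lt_def] at this ⊢
      have : (i : ℕ) ≠ (j : ℕ) := fun h => hji (Fin.ext h.symm)
      omega
    have hbP : b ∉ P (i : ℕ) := by
      intro h
      obtain ⟨-, m, hm, hm2⟩ := Finset.mem_filter.mp h
      have : m = j := huniq b m j hm2 hj
      rw [this] at hm
      rw [Fin.lt_def] at hij
      omega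
    have habOut : (a, b) ∈ dOut E (P (i : ℕ)) :=
      Finset.mem_filter.mpr ⟨hab, hCP _ i le_rfl hi, hbP⟩
    have hilt : (i : ℕ) + 1 < ℓ := by
      by_contra h
      have hieq : (i : ℕ) = ℓ - 1 := by have := i.isLt; omega
      rw [hieq, hPlast] at habOut
      exact (Finset.mem_filter.mp habOut).2.2 (hCsub j hj)
    have := hnoskip (i : ℕ) hilt (a, b) habOut
    have : j = ⟨(i : ℕ) + 1, hilt⟩ := huniq b j _ hj this
    rw [this]
  -- v is in the last component
  obtain ⟨b, hbS, hvb⟩ := hvOut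
  have hvlast : v ∈ C last :=
    hOutLast (v, b) (Finset.mem_filter.mpr ⟨hvb, hv, hbS⟩)
  -- u is in the first component
  obtain ⟨a0, ha0S, ha0u⟩ := huIn
  have hu0 : u ∈ C z :=
    hInC0 (a0, u) (Finset.mem_filter.mpr ⟨ha0u, ha0S, hu⟩)
  -- the walk lemma
  have hwalk : ∀ q : List V, q.Chain' (fun a b => (a, b) ∈ E) →
      ∀ a, q.head? = some a → ∀ i : Fin ℓ, a ∈ C i → q.getLast? = some v →
      ∀ k : Fin ℓ, i ≤ k → ∃ w ∈ q, w ∈ C k := by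
    intro q
    induction q with
    | nil => intro _ a ha; simp at ha
    | cons c q ih =>
      intro hch a ha i hi hlast' k hk
      have hca : c = a := by simpa using ha
      subst hca
      cases q with
      | nil =>
        have hcv : c = v := by simpa using hlast'
        subst hcv
        have hil : i = last := huniq c i last hi hvlast
        have hkl : k = i := by
          apply Fin.ext
          rw [Fin.le_def] at hk
          have hklt := k.isLt
          have hiv : (i : ℕ) = ℓ - 1 := by rw [hil]
          omega
        exact ⟨c, by simp, hkl ▸ hi⟩
      | cons d r =>
        have hedge : (c, d) ∈ E := (List.isChain_cons_cons.mp hch).1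
        have hch' : (d :: r).Chain' (fun a b => (a, b) ∈ E) := (List.isChain_cons_cons.mp hch).2
        have hlast'' : (d :: r).getLast? = some v := by
          rw [List.getLast?_cons_cons] at hlast'; exact hlast'
        by_cases hdS : d ∈ S
        · obtain ⟨j, hj⟩ := hmem d hdS
          by_cases hjk : j ≤ k
          · obtain ⟨w, hw, hwk⟩ := ih hch' d rfl j hj hlast'' k hjk
            exact ⟨w, List.mem_cons_of_mem c hw, hwk⟩
          · rcases hstep c d hedge i hi j hj with h | h
            · exact absurd (h ▸ hk) hjk
            · have : k = i := by
                apply Fin.ext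
                rw [Fin.le_def] at hk hjk
                omega
              exact ⟨c, by simp, this ▸ hi⟩
        · have : c ∈ C last :=
            hOutLast (c, d) (Finset.mem_filter.mpr ⟨hedge, hCsub i hi, hdS⟩)
          have hil : i = last := huniq c i last hi this
          have hkl : k = i := by
            apply Fin.ext
            rw [Fin.le_def] at hk
            have hklt := k.isLt
            have hiv : (i : ℕ) = ℓ - 1 := by rw [hil]
            omega
          exact ⟨c, by simp, hkl ▸ hi⟩
  intro k
  exact hwalk p hchain u hhead z hu0 hlast k (by rw [Fin.le_def]; exact Nat.zero_le _)
end

section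
/- Let G = (V,E) be a digraph and F an Eulerian multiset of edges (every vertex has equal in- and out-degree in F). If every edge (u,v) ∈ F has weight w(u,v) = y_u + y_v for nonnegative vertex weights y, and every vertex v with y_v > 0 satisfies |δ⁺_F(v)| ≤ 2, then for every connected component T of F, w(T) ≤ 4·Σ_{v ∈ V(T)} y_v. -/
/-- Let `F` be an Eulerian multiset of directed edges (in-degree = out-degree at every
vertex), with edge weights `w(u,v) = y u + y v` for nonnegative vertex weights `y`, such
that every vertex `v` with `y v > 0` has out-degree at most `2` in `F`. Then every
connected component `T` of `F` (here: the multiset of edges of `F` whose endpoints are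
reachable from a vertex `u` in the underlying undirected graph of `F`) satisfies
`w(T) ≤ 4·Σ_{v ∈ V(T)} y v`. -/
theorem component_weight_le_four_sum {V : Type*} [DecidableEq V]
    (F : Multiset (V × V)) (y : V → ℝ) (hy : ∀ v, 0 ≤ y v)
    (heul : ∀ v : V, F.countP (fun e => e.1 = v) = F.countP (fun e => e.2 = v))
    (hdeg : ∀ v : V, 0 < y v → F.countP (fun e => e.1 = v) ≤ 2)
    (u : V) (T : Multiset (V × V))
    (hT : ∀ e : V × V,
      (Relation.ReflTransGen (fun a b => (a, b) ∈ F ∨ (b, a) ∈ F) u e.1 →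
        T.count e = F.count e) ∧
      (¬ Relation.ReflTransGen (fun a b => (a, b) ∈ F ∨ (b, a) ∈ F) u e.1 →
        T.count e = 0)) :
    (T.map (fun e => y e.1 + y e.2)).sum ≤
      4 * ∑ v ∈ T.toFinset.image Prod.fst ∪ T.toFinset.image Prod.snd, y v := by
  have hTF : T ≤ F := by
    rw [Multiset.le_iff_count]
    intro e
    rcases hT e with ⟨h1, h2⟩
    by_cases h : Relation.ReflTransGen (fun a b => (a, b) ∈ F ∨ (b, a) ∈ F) u e.1
    · rw [h1 h]
    · rw [h2 h]; exact Nat.zero_le _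
  set S := T.toFinset.image Prod.fst ∪ T.toFinset.image Prod.snd with hS
  have half : ∀ g : V × V → V, (T.map g).toFinset ⊆ S →
      (∀ v, 0 < y v → (T.map g).count v ≤ 2) →
      ((T.map g).map y).sum ≤ ∑ v ∈ S, 2 * y v := by
    intro g hsub hcnt
    rw [Finset.sum_multiset_map_count]
    calc ∑ v ∈ (T.map g).toFinset, (T.map g).count v • y v
        ≤ ∑ v ∈ (T.map g).toFinset, 2 * y v := by
          apply Finset.sum_le_sum
          intro v _
          rcases eq_or_lt_of_le (hy v) with h0 | h0
          · rw [← h0]; simp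
          · rw [nsmul_eq_mul]
            have h2 : ((T.map g).count v : ℝ) ≤ 2 := by exact_mod_cast hcnt v h0
            nlinarith [hy v]
      _ ≤ ∑ v ∈ S, 2 * y v := by
          apply Finset.sum_le_sum_of_subset_of_nonneg hsub
          intro v _ _
          nlinarith [hy v]
  have cmap : ∀ (g : V × V → V) (v : V),
      (T.map g).count v = T.countP (fun e => g e = v) := by
    intro g v
    rw [Multiset.count_map, Multiset.countP_eq_card_filter]
    congr 1
    exact Multiset.filter_congr (fun e _ => by simp [eq_comm])
  have hfst : ((T.map Prod.fst).map y).sum ≤ ∑ v ∈ S, 2 * y v := by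
    apply half
    · rw [Multiset.toFinset_map]; exact Finset.subset_union_left
    · intro v hv
      rw [cmap]
      calc T.countP (fun e => e.1 = v) ≤ F.countP (fun e => e.1 = v) :=
            Multiset.countP_le_of_le _ hTF
        _ ≤ 2 := hdeg v hv
  have hsnd : ((T.map Prod.snd).map y).sum ≤ ∑ v ∈ S, 2 * y v := by
    apply half
    · rw [Multiset.toFinset_map]; exact Finset.subset_union_right
    · intro v hv
      rw [cmap]
      calc T.countP (fun e => e.2 = v) ≤ F.countP (fun e => e.2 = v) :=
            Multiset.countP_le_of_le _ hTF
        _ = F.countP (fun e => e.1 = v) := (heul v).symm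
        _ ≤ 2 := hdeg v hv
  have hsplit : (T.map (fun e => y e.1 + y e.2)).sum
      = ((T.map Prod.fst).map y).sum + ((T.map Prod.snd).map y).sum := by
    rw [Multiset.map_map, Multiset.map_map, ← Multiset.sum_map_add]
    rfl
  have h2 : ∑ v ∈ S, 2 * y v = 2 * ∑ v ∈ S, y v := by
    rw [Finset.mul_sum]
  rw [hsplit]
  rw [h2] at hfst hsnd
  linarith
end

section
/- Let L be a laminar family of tight sets of a circulation x > 0 on a strongly connected digraph, S ∈ L with strongly connected components S₁,…,S_ℓ (topologically ordered) of G[S]. Then for each i, L ∪ {S_i} is a laminar family. -/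
/-!
Suppose `R ∈ L` crosses `Si`. Laminarity gives `R ⊆ S`, and strong connectivity of `Si` gives
edges of positive weight from `R ∩ Si` to `Si \ R` and back. Since `x` is a circulation, every
nonempty proper set has in-flow and out-flow at least `1`. Write `Si = M ∩ W`, where `M` (the
vertices reachable from `u` in `G[S]`) is closed under out-edges inside `S` and `W` (the vertices
reaching `u`) under in-edges. No edge leaves `(R ∩ M) \ W` inside `R`, so its out-flow is at most
the out-flow `1` of `R` minus the positive weight leaving `R ∩ Si`; being below `1`, the set is
empty, and dually `(R ∩ W) \ M = ∅`. Hence no edge joins `R ∩ Si` and `R \ Si`, so their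
in-flows, each at least `1`, add up to the in-flow `1` of `R`.
-/

open Finset

variable {V : Type*}

namespace Relation.ReflTransGen

variable {α : Type*} {r : α → α → Prop} {a c : α} {X : Set α}

theorem exists_step_mem_notMem (h : ReflTransGen r a c) (ha : a ∈ X) (hc : c ∉ X) :
    ∃ p q, ReflTransGen r a p ∧ r p q ∧ ReflTransGen r q c ∧ p ∈ X ∧ q ∉ X := by
  induction h using head_induction_on with
  | refl => exact absurd ha hc
  | @head a b hab hbc ih =>
    by_cases hb : b ∈ X
    · obtain ⟨p, q, hap, hpq, hqc, hp, hq⟩ := ih hb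
      exact ⟨p, q, hap.head hab, hpq, hqc, hp, hq⟩
    · exact ⟨a, b, refl, hab, hbc, ha, hb⟩

end Relation.ReflTransGen

section Flow

variable [DecidableEq V] (E : Finset (V × V)) (x : V × V → ℝ)

def flow (X Y : Finset V) : ℝ := ∑ e ∈ E with e.1 ∈ X ∧ e.2 ∈ Y, x e

def IsCirculation : Prop := ∀ v : V, ∑ e ∈ E with e.1 = v, x e = ∑ e ∈ E with e.2 = v, x e

variable {E x}

theorem flow_eq_sum_ite (X Y : Finset V) :
    flow E x X Y = ∑ e ∈ E, if e.1 ∈ X ∧ e.2 ∈ Y then x e else 0 :=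
  sum_filter _ _

theorem flow_union_left {X X' : Finset V} (h : Disjoint X X') (Y : Finset V) :
    flow E x (X ∪ X') Y = flow E x X Y + flow E x X' Y := by
  simp only [flow_eq_sum_ite, ← sum_add_distrib]
  refine sum_congr rfl fun e _ => ?_
  have : e.1 ∈ X → e.1 ∉ X' := fun h' => disjoint_left.1 h h'
  by_cases h1 : e.1 ∈ X <;> by_cases h2 : e.1 ∈ X' <;> simp_all

theorem flow_union_right (X : Finset V) {Y Y' : Finset V} (h : Disjoint Y Y') :
    flow E x X (Y ∪ Y') = flow E x X Y + flow E x X Y' := by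
  simp only [flow_eq_sum_ite, ← sum_add_distrib]
  refine sum_congr rfl fun e _ => ?_
  have : e.2 ∈ Y → e.2 ∉ Y' := fun h' => disjoint_left.1 h h'
  by_cases h1 : e.2 ∈ Y <;> by_cases h2 : e.2 ∈ Y' <;> simp_all

theorem flow_mono (hx : ∀ e ∈ E, 0 ≤ x e) {X X' Y Y' : Finset V} (hX : X ⊆ X') (hY : Y ⊆ Y') :
    flow E x X Y ≤ flow E x X' Y' :=
  sum_le_sum_of_subset_of_nonneg (monotone_filter_right E fun _ _ h => ⟨hX h.1, hY h.2⟩)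
    fun e he _ => hx e (mem_of_mem_filter e he)

theorem flow_eq_zero {X Y : Finset V} (h : ∀ e ∈ E, e.1 ∈ X → e.2 ∉ Y) : flow E x X Y = 0 :=
  sum_eq_zero fun e he => by
    obtain ⟨he, h1, h2⟩ := mem_filter.1 he
    exact absurd h2 (h e he h1)

theorem flow_pos (hx : ∀ e ∈ E, 0 < x e) {X Y : Finset V} {e : V × V} (he : e ∈ E)
    (h1 : e.1 ∈ X) (h2 : e.2 ∈ Y) : 0 < flow E x X Y :=
  sum_pos' (fun e he => (hx e (mem_of_mem_filter e he)).le)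
    ⟨e, mem_filter.2 ⟨he, h1, h2⟩, hx e he⟩

theorem nonempty_of_flow_pos {X Y : Finset V} (h : 0 < flow E x X Y) : X.Nonempty := by
  rw [nonempty_iff_ne_empty]
  rintro rfl
  simp [flow] at h

theorem flow_image_swap (X Y : Finset V) :
    flow (E.image Prod.swap) (x ∘ Prod.swap) X Y = flow E x Y X := by
  rw [flow, filter_image, sum_image (Prod.swap_injective.injOn)]
  simp only [flow, Function.comp_apply, Prod.swap_swap, Prod.fst_swap, Prod.snd_swap, and_comm]

theorem flow_compl_union [Fintype V] {A B : Finset V} (h : Disjoint A B) :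
    flow E x Aᶜ A + flow E x Bᶜ B
      = flow E x A B + flow E x B A + flow E x (A ∪ B)ᶜ (A ∪ B) := by
  simp only [flow_eq_sum_ite, ← sum_add_distrib]
  refine sum_congr rfl fun e _ => ?_
  have h1 : e.1 ∈ A → e.1 ∉ B := fun h' => disjoint_left.1 h h'
  have h2 : e.2 ∈ A → e.2 ∉ B := fun h' => disjoint_left.1 h h'
  by_cases e.1 ∈ A <;> by_cases e.1 ∈ B <;> by_cases e.2 ∈ A <;> by_cases e.2 ∈ B <;>
    simp_all

end Flow

section Circulation

variable [DecidableEq V] [Fintype V] {E : Finset (V × V)} {x : V × V → ℝ}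

theorem sum_dIn_eq_flow (T : Finset V) : ∑ e ∈ dIn E T, x e = flow E x Tᶜ T := by
  simp only [dIn, flow, mem_compl]

theorem sum_dOut_eq_flow (T : Finset V) : ∑ e ∈ dOut E T, x e = flow E x T Tᶜ := by
  simp only [dOut, flow, mem_compl]

theorem flow_compl_self_eq_flow_self_compl (hcirc : IsCirculation E x)
    (T : Finset V) : flow E x Tᶜ T = flow E x T Tᶜ := by
  have hTT : ∑ e ∈ E with e.1 ∈ T, x e = ∑ e ∈ E with e.2 ∈ T, x e := by
    rw [← sum_fiberwise_eq_sum_filter, ← sum_fiberwise_eq_sum_filter]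
    exact sum_congr rfl fun v _ => hcirc v
  have hout : ∑ e ∈ E with e.1 ∈ T, x e = flow E x T T + flow E x T Tᶜ := by
    rw [← flow_union_right _ disjoint_compl_right, union_compl]
    simp only [flow, mem_univ, and_true]
  have hin : ∑ e ∈ E with e.2 ∈ T, x e = flow E x T T + flow E x Tᶜ T := by
    rw [← flow_union_left disjoint_compl_right, union_compl]
    simp only [flow, mem_univ, true_and]
  linarith

theorem one_le_flow_out (hcirc : IsCirculation E x)
    (hsubtour : ∀ R : Finset V, R.Nonempty → R ≠ Finset.univ →
      2 ≤ (∑ e ∈ dIn E R, x e) + (∑ e ∈ dOut E R, x e))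
    (T : Finset V) (hT : T.Nonempty) (hTu : T ≠ univ) :
    1 ≤ flow E x T Tᶜ := by
  have := hsubtour T hT hTu
  rw [sum_dIn_eq_flow, sum_dOut_eq_flow, flow_compl_self_eq_flow_self_compl hcirc] at this
  linarith

theorem one_le_flow_in (hcirc : IsCirculation E x)
    (hsubtour : ∀ R : Finset V, R.Nonempty → R ≠ Finset.univ →
      2 ≤ (∑ e ∈ dIn E R, x e) + (∑ e ∈ dOut E R, x e))
    (T : Finset V) (hT : T.Nonempty) (hTu : T ≠ univ) :
    1 ≤ flow E x Tᶜ T :=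
  flow_compl_self_eq_flow_self_compl hcirc T ▸ one_le_flow_out hcirc hsubtour T hT hTu

end Circulation

section TightSets

variable [DecidableEq V] [Fintype V] {E : Finset (V × V)} {x : V × V → ℝ} {S M W R : Finset V}

theorem inter_subset_of_flow_out_le_one (hx : ∀ e ∈ E, 0 ≤ x e)
    (hout : ∀ T : Finset V, T.Nonempty → T ≠ univ → 1 ≤ flow E x T Tᶜ)
    (hM : ∀ e ∈ E, e.1 ∈ M → e.2 ∈ S → e.2 ∈ M) (hW : ∀ e ∈ E, e.1 ∈ S → e.2 ∈ W → e.1 ∈ W)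
    (hRS : R ⊆ S) (hRu : R ≠ univ) (hR : flow E x R Rᶜ ≤ 1)
    (hleak : 0 < flow E x (R ∩ (M ∩ W)) Rᶜ) : R ∩ M ⊆ W := by
  set Q := (R ∩ M) \ W
  have hQR : Q ⊆ R := sdiff_subset.trans inter_subset_left
  rw [← sdiff_eq_empty_iff_subset]
  by_contra hQ
  have hQ_closed : flow E x Q (R \ Q) = 0 := by
    refine flow_eq_zero fun e he h1 h2 => ?_
    obtain ⟨h1RM, h1W⟩ := mem_sdiff.1 h1
    obtain ⟨h1R, h1M⟩ := mem_inter.1 h1RM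
    obtain ⟨h2R, h2Q⟩ := mem_sdiff.1 h2
    have h2W : e.2 ∈ W := by
      by_contra h2W
      exact h2Q (mem_sdiff.2 ⟨mem_inter.2 ⟨h2R, hM e he h1M (hRS h2R)⟩, h2W⟩)
    exact h1W (hW e he (hRS h1R) h2W)
  have hQ_out : flow E x Q Qᶜ = flow E x Q (R \ Q) + flow E x Q Rᶜ := by
    rw [← flow_union_right _ (disjoint_compl_right.mono_left sdiff_subset)]
    congr 1
    ext v
    have := @hQR v
    simp only [mem_compl, mem_union, mem_sdiff]
    tauto
  have hR_out : flow E x Q Rᶜ + flow E x (R ∩ (M ∩ W)) Rᶜ ≤ flow E x R Rᶜ := by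
    rw [← flow_union_left]
    · exact flow_mono hx (union_subset hQR inter_subset_left) subset_rfl
    · exact disjoint_sdiff_self_left.mono_right (inter_subset_right.trans inter_subset_right)
  have hQ_one := hout Q (nonempty_iff_ne_empty.2 hQ)
    (ssubset_univ_iff.1 (hQR.trans_ssubset (ssubset_univ_iff.2 hRu)))
  linarith

theorem inter_subset_of_flow_in_le_one (hx : ∀ e ∈ E, 0 ≤ x e)
    (hin : ∀ T : Finset V, T.Nonempty → T ≠ univ → 1 ≤ flow E x Tᶜ T)
    (hM : ∀ e ∈ E, e.1 ∈ M → e.2 ∈ S → e.2 ∈ M) (hW : ∀ e ∈ E, e.1 ∈ S → e.2 ∈ W → e.1 ∈ W)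
    (hRS : R ⊆ S) (hRu : R ≠ univ) (hR : flow E x Rᶜ R ≤ 1)
    (hleak : 0 < flow E x Rᶜ (R ∩ (M ∩ W))) : R ∩ W ⊆ M := by
  refine inter_subset_of_flow_out_le_one (E := E.image Prod.swap) (x := x ∘ Prod.swap)
    ?_ ?_ ?_ ?_ hRS hRu ?_ ?_
  · exact forall_mem_image.2 fun e he => hx e he
  · simpa only [flow_image_swap] using hin
  · exact forall_mem_image.2 fun e he h1 h2 => hW e he h2 h1
  · exact forall_mem_image.2 fun e he h1 h2 => hM e he h2 h1
  · rwa [flow_image_swap]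
  · rwa [flow_image_swap, inter_comm W]

theorem subset_inter_of_tight (hx : ∀ e ∈ E, 0 ≤ x e)
    (hout : ∀ T : Finset V, T.Nonempty → T ≠ univ → 1 ≤ flow E x T Tᶜ)
    (hin : ∀ T : Finset V, T.Nonempty → T ≠ univ → 1 ≤ flow E x Tᶜ T)
    (hM : ∀ e ∈ E, e.1 ∈ M → e.2 ∈ S → e.2 ∈ M) (hW : ∀ e ∈ E, e.1 ∈ S → e.2 ∈ W → e.1 ∈ W)
    (hRS : R ⊆ S) (hRu : R ≠ univ) (hR_out : flow E x R Rᶜ ≤ 1) (hR_in : flow E x Rᶜ R ≤ 1)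
    (hleak_out : 0 < flow E x (R ∩ (M ∩ W)) Rᶜ) (hleak_in : 0 < flow E x Rᶜ (R ∩ (M ∩ W))) :
    R ⊆ M ∩ W := by
  have hRM := inter_subset_of_flow_out_le_one hx hout hM hW hRS hRu hR_out hleak_out
  have hRW := inter_subset_of_flow_in_le_one hx hin hM hW hRS hRu hR_in hleak_in
  set A := R ∩ (M ∩ W)
  set B := R \ (M ∩ W)
  rw [← sdiff_eq_empty_iff_subset]
  by_contra hB
  have hAB : flow E x A B = 0 := by
    refine flow_eq_zero fun e he h1 h2 => ?_
    obtain ⟨h2R, h2MW⟩ := mem_sdiff.1 h2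
    have h2M := hM e he (mem_inter.1 (mem_inter.1 h1).2).1 (hRS h2R)
    exact h2MW (mem_inter.2 ⟨h2M, hRM (mem_inter.2 ⟨h2R, h2M⟩)⟩)
  have hBA : flow E x B A = 0 := by
    refine flow_eq_zero fun e he h1 h2 => ?_
    obtain ⟨h1R, h1MW⟩ := mem_sdiff.1 h1
    have h1W := hW e he (hRS h1R) (mem_inter.1 (mem_inter.1 h2).2).2
    exact h1MW (mem_inter.2 ⟨hRW (mem_inter.2 ⟨h1R, h1W⟩), h1W⟩)
  have hsplit := flow_compl_union (E := E) (x := x) (disjoint_sdiff_inter R (M ∩ W))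
  rw [sdiff_union_inter] at hsplit
  have hA := hin A (nonempty_of_flow_pos hleak_out)
    (ssubset_univ_iff.1 (inter_subset_left.trans_ssubset (ssubset_univ_iff.2 hRu)))
  have hB := hin B (nonempty_iff_ne_empty.2 hB)
    (ssubset_univ_iff.1 (sdiff_subset.trans_ssubset (ssubset_univ_iff.2 hRu)))
  linarith

end TightSets

section InducedSubgraph

def inducedAdj (E : Finset (V × V)) (S : Finset V) (a b : V) : Prop := (a, b) ∈ E ∧ a ∈ S ∧ b ∈ S

variable {E : Finset (V × V)} {S Si : Finset V} {u : V}

theorem exists_edge_of_scc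
    (hSi : ∀ v : V, v ∈ Si ↔ v ∈ S ∧
      Relation.ReflTransGen (inducedAdj E S) u v ∧ Relation.ReflTransGen (inducedAdj E S) v u)
    {a c : V} (ha : a ∈ Si) (hc : c ∈ Si) {X : Finset V} (haX : a ∈ X) (hcX : c ∉ X) :
    ∃ e ∈ E, e.1 ∈ Si ∧ e.1 ∈ X ∧ e.2 ∈ Si ∧ e.2 ∉ X := by
  obtain ⟨-, hua, hau⟩ := (hSi a).1 ha
  obtain ⟨-, huc, hcu⟩ := (hSi c).1 hc
  obtain ⟨p, q, hap, hpq, hqc, hpX, hqX⟩ :=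
    (hau.trans huc).exists_step_mem_notMem (X := (X : Set V)) haX hcX
  refine ⟨(p, q), hpq.1, (hSi p).2 ⟨hpq.2.1, hua.trans hap, ?_⟩, hpX,
    (hSi q).2 ⟨hpq.2.2, (hua.trans hap).tail hpq, hqc.trans hcu⟩, hqX⟩
  exact (hqc.trans hcu).head hpq

theorem exists_forward_backward_closed_of_scc [DecidableEq V]
    (hSi : ∀ v : V, v ∈ Si ↔ v ∈ S ∧
      Relation.ReflTransGen (inducedAdj E S) u v ∧ Relation.ReflTransGen (inducedAdj E S) v u) :
    ∃ M W : Finset V, (∀ e ∈ E, e.1 ∈ M → e.2 ∈ S → e.2 ∈ M) ∧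
      (∀ e ∈ E, e.1 ∈ S → e.2 ∈ W → e.1 ∈ W) ∧ Si = M ∩ W := by
  classical
  refine ⟨S.filter (Relation.ReflTransGen (inducedAdj E S) u),
    S.filter (Relation.ReflTransGen (inducedAdj E S) · u), ?_, ?_, ?_⟩
  · intro e he h1 h2
    rw [mem_filter] at h1 ⊢
    exact ⟨h2, h1.2.tail ⟨he, h1.1, h2⟩⟩
  · intro e he h1 h2
    rw [mem_filter] at h2 ⊢
    exact ⟨h1, h2.2.head ⟨he, h1, h2.1⟩⟩
  · ext v
    simp only [hSi, mem_inter, mem_filter]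
    tauto

end InducedSubgraph

theorem scc_laminar_general [DecidableEq V] [Fintype V] (E : Finset (V × V)) (x : V × V → ℝ)
    (hpos : ∀ e ∈ E, 0 < x e)
    (hcirc : ∀ v : V, ∑ e ∈ E.filter (fun e => e.1 = v), x e
        = ∑ e ∈ E.filter (fun e => e.2 = v), x e)
    (hsubtour : ∀ R : Finset V, R.Nonempty → R ≠ Finset.univ →
      2 ≤ (∑ e ∈ dIn E R, x e) + (∑ e ∈ dOut E R, x e))
    (L : Finset (Finset V))
    (hlam : ∀ A ∈ L, ∀ B ∈ L, A ⊆ B ∨ B ⊆ A ∨ A ∩ B = ∅)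
    (htightL : ∀ R ∈ L, (∑ e ∈ dIn E R, x e) = 1 ∧ (∑ e ∈ dOut E R, x e) = 1)
    (S : Finset V) (hSL : S ∈ L)
    (u : V) (Si : Finset V)
    (hSi : ∀ v : V, v ∈ Si ↔ v ∈ S ∧
      Relation.ReflTransGen (fun a b => (a, b) ∈ E ∧ a ∈ S ∧ b ∈ S) u v ∧
      Relation.ReflTransGen (fun a b => (a, b) ∈ E ∧ a ∈ S ∧ b ∈ S) v u) :
    ∀ R ∈ L, R ⊆ Si ∨ Si ⊆ R ∨ R ∩ Si = ∅ := by
  intro R hR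
  by_cases hSiR : Si ⊆ R
  · exact Or.inr (Or.inl hSiR)
  by_cases hRSi : R ∩ Si = ∅
  · exact Or.inr (Or.inr hRSi)
  left
  obtain ⟨a, haRSi⟩ := nonempty_iff_ne_empty.2 hRSi
  obtain ⟨haR, haSi⟩ := mem_inter.1 haRSi
  obtain ⟨c, hcSi, hcR⟩ := not_subset.1 hSiR
  have hRS : R ⊆ S := by
    have hSiS : Si ⊆ S := fun v hv => ((hSi v).1 hv).1
    rcases hlam R hR S hSL with h | h | h
    · exact h
    · exact absurd (hSiS.trans h) hSiR
    · exact absurd (h ▸ mem_inter.2 ⟨haR, hSiS haSi⟩) (notMem_empty a)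
  obtain ⟨e, he, he1Si, he1R, he2Si, he2R⟩ := exists_edge_of_scc hSi haSi hcSi haR hcR
  obtain ⟨f, hf, hf1Si, hf1R, hf2Si, hf2R⟩ :=
    exists_edge_of_scc hSi hcSi haSi (mem_compl.2 hcR) (notMem_compl.2 haR)
  obtain ⟨M, W, hM, hW, rfl⟩ := exists_forward_backward_closed_of_scc hSi
  obtain ⟨hR_in, hR_out⟩ := htightL R hR
  rw [sum_dIn_eq_flow] at hR_in
  rw [sum_dOut_eq_flow] at hR_out
  exact subset_inter_of_tight (fun e he => (hpos e he).le)
    (one_le_flow_out hcirc hsubtour) (one_le_flow_in hcirc hsubtour)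
    hM hW hRS (fun h => hcR (h ▸ mem_univ c)) hR_out.le hR_in.le
    (flow_pos hpos he (mem_inter.2 ⟨he1R, he1Si⟩) (mem_compl.2 he2R))
    (flow_pos hpos hf hf1R (mem_inter.2 ⟨notMem_compl.1 hf2R, hf2Si⟩))

/-- Let `L` be a laminar family of tight sets of a strictly positive circulation `x` on a
strongly connected digraph satisfying the subtour elimination constraints, `S ∈ L`, and
`Si` a strongly connected component of `G[S]` (namely, the strongly connected component of
a vertex `u ∈ S` in the subgraph induced by `S`). Then `L ∪ {Si}` is laminar: every
`R ∈ L` satisfies `R ⊆ Si`, `Si ⊆ R`, or `R ∩ Si = ∅`. -/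
theorem scc_laminar [DecidableEq V] [Fintype V] (E : Finset (V × V)) (x : V × V → ℝ)
    (hpos : ∀ e ∈ E, 0 < x e)
    (hcirc : ∀ v : V, ∑ e ∈ E.filter (fun e => e.1 = v), x e
        = ∑ e ∈ E.filter (fun e => e.2 = v), x e)
    (hstrong : ∀ a b : V, Relation.ReflTransGen (fun p q => (p, q) ∈ E) a b)
    (hsubtour : ∀ R : Finset V, R.Nonempty → R ≠ Finset.univ →
      2 ≤ (∑ e ∈ dIn E R, x e) + (∑ e ∈ dOut E R, x e))
    (L : Finset (Finset V))
    (hlam : ∀ A ∈ L, ∀ B ∈ L, A ⊆ B ∨ B ⊆ A ∨ A ∩ B = ∅)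
    (htightL : ∀ R ∈ L, (∑ e ∈ dIn E R, x e) = 1 ∧ (∑ e ∈ dOut E R, x e) = 1)
    (S : Finset V) (hSL : S ∈ L)
    (u : V) (hu : u ∈ S) (Si : Finset V)
    (hSi : ∀ v : V, v ∈ Si ↔ v ∈ S ∧
      Relation.ReflTransGen (fun a b => (a, b) ∈ E ∧ a ∈ S ∧ b ∈ S) u v ∧
      Relation.ReflTransGen (fun a b => (a, b) ∈ E ∧ a ∈ S ∧ b ∈ S) v u) :
    ∀ R ∈ L, R ⊆ Si ∨ Si ⊆ R ∨ R ∩ Si = ∅ :=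
  scc_laminar_general E x hpos hcirc hsubtour L hlam htightL S hSL u Si hSi
end

section
/- Let L be a laminar family on V, S a set such that L ∪ {S} is laminar, and P a walk whose vertices all lie in S. Then every set R ∈ L crossed by an edge of P satisfies R ⊊ S, and if P crosses every R ∈ L at most twice, then the total weight of P under the laminar-induced weight function w(u,v) = Σ_{R ∈ L : (u,v) ∈ δ(R)} y_R is at most Σ_{R ∈ L, R ⊊ S} 2·y_R. -/
/-!
By laminarity of `{R, S}`, an edge with both ends in `S` can cross `R` only if `R ⊊ S`.
Exchanging the two sums, the weight of `P` is `∑ R, c_R • y_R` with `c_R` the number of edges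
of `P` crossing `R`; here `c_R ≤ 2`, and `c_R = 0` unless `R ⊊ S`.
-/

def crossB {V : Type*} [DecidableEq V] (R : Finset V) (e : V × V) : Bool :=
  decide (e.1 ∈ R) != decide (e.2 ∈ R)

theorem ssubset_of_crossB {V : Type*} [DecidableEq V] {R S : Finset V}
    (hRS : R ⊆ S ∨ S ⊆ R ∨ R ∩ S = ∅) {e : V × V} (he : e.1 ∈ S ∧ e.2 ∈ S)
    (hc : crossB R e = true) : R ⊂ S := by
  obtain ⟨u, v, huR, hvR, huS, hvS⟩ : ∃ u v, u ∈ R ∧ v ∉ R ∧ u ∈ S ∧ v ∈ S := by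
    by_cases h₁ : e.1 ∈ R <;> by_cases h₂ : e.2 ∈ R <;> simp [crossB, h₁, h₂] at hc
    exacts [⟨_, _, h₁, h₂, he.1, he.2⟩, ⟨_, _, h₂, h₁, he.2, he.1⟩]
  rcases hRS with h | h | h
  · exact Finset.ssubset_iff_of_subset h |>.mpr ⟨v, hvS, hvR⟩
  · exact absurd (h hvS) hvR
  · exact absurd (Finset.mem_inter.mpr ⟨huR, huS⟩) (h ▸ Finset.notMem_empty u)

theorem List.sum_map_sum_filter {α β M : Type*} [AddCommMonoid M] (l : List α)
    (s : Finset β) (p : β → α → Prop) [∀ b a, Decidable (p b a)] (f : β → M) :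
    (l.map fun a => ∑ b ∈ s with p b a, f b).sum = ∑ b ∈ s, l.countP (p b ·) • f b := by
  induction l with
  | nil => simp
  | cons a l ih =>
    rw [List.map_cons, List.sum_cons, ih, Finset.sum_filter, add_comm]
    simp only [List.countP_cons, add_smul, Finset.sum_add_distrib]
    congr 1
    exact Finset.sum_congr rfl fun b _ => by by_cases h : p b a <;> simp [h]

/-- Let `L` be a laminar family on `V` (with nonnegative weights `y`), `S` a set such
that `L ∪ {S}` is laminar, and `P` a walk whose vertices all lie in `S`. Then every set
`R ∈ L` crossed by an edge of `P` satisfies `R ⊊ S`; moreover, if `P` crosses every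
`R ∈ L` at most twice, then the total weight of `P` under the laminar-induced weight
function `w(u,v) = Σ_{R ∈ L : (u,v) ∈ δ(R)} y R` is at most `2·Σ_{R ∈ L, R ⊊ S} y R`. -/
theorem walk_inside_laminar_cost {V : Type*} [DecidableEq V]
    (L : Finset (Finset V)) (S : Finset V) (y : Finset V → ℝ)
    (hy : ∀ R ∈ L, 0 ≤ y R)
    (hlam : ∀ A ∈ insert S L, ∀ B ∈ insert S L, A ⊆ B ∨ B ⊆ A ∨ A ∩ B = ∅)
    (P : List (V × V)) (hP : ∀ e ∈ P, e.1 ∈ S ∧ e.2 ∈ S) :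
    (∀ R ∈ L, (∃ e ∈ P, crossB R e = true) → R ⊂ S) ∧
    ((∀ R ∈ L, P.countP (fun e => crossB R e) ≤ 2) →
      (P.map (fun e => ∑ R ∈ L.filter (fun R => crossB R e = true), y R)).sum ≤
        2 * ∑ R ∈ L.filter (fun R => R ⊂ S), y R) := by
  have crossed_ssubset : ∀ R ∈ L, (∃ e ∈ P, crossB R e = true) → R ⊂ S :=
    fun R hR ⟨e, heP, hc⟩ => ssubset_of_crossB
      (hlam R (Finset.mem_insert_of_mem hR) S (Finset.mem_insert_self S L)) (hP e heP) hc
  refine ⟨crossed_ssubset, fun hcount => ?_⟩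
  have support_ssubset : ∀ R ∈ L, P.countP (fun e => crossB R e) • y R ≠ 0 → R ⊂ S :=
    fun R hR hne => crossed_ssubset R hR <| by
      simpa using List.countP_pos_iff.mp (Nat.pos_of_ne_zero (left_ne_zero_of_smul hne))
  calc (P.map (fun e => ∑ R ∈ L.filter (fun R => crossB R e = true), y R)).sum
      = ∑ R ∈ L with R ⊂ S, P.countP (fun e => crossB R e) • y R := by
        rw [List.sum_map_sum_filter, Finset.sum_filter_of_ne support_ssubset]
        simp only [Bool.decide_eq_true]
    _ ≤ ∑ R ∈ L with R ⊂ S, 2 * y R := by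
        refine Finset.sum_le_sum fun R hR => ?_
        have hR := (Finset.mem_filter.mp hR).1
        rw [nsmul_eq_mul]
        exact mul_le_mul_of_nonneg_right (by exact_mod_cast hcount R hR) (hy R hR)
    _ = 2 * ∑ R ∈ L with R ⊂ S, y R := (Finset.mul_sum ..).symm
end
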